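/- arXiv:1910.13428 — 3 statements merged into one kernel-verified Lean document; each statement's English description precedes it below -/
import Mathlib

section
/- Let A ⊆ R^d be a finite set of demand points with |A| ≥ d+1, U a finite set of foci, and ω weights summing to 1. Define for S ⊆ A the value r*_S = inf_{x∈R^d} max_{a∈S} Σ_{u∈U} ω_u ‖a−u−x‖, and r* = r*_A. Then r* = max_{S⊆A, |S|=d+1} r*_S. Equivalently, there exists a subset S of d+1 demand points whose minimal covering radius equals the minimal covering radius of all of A. -/
/-- The minimal covering radius of a finite set `S` of demand points by a
translated polyellipsoid with foci `U` and weights `ω`. -/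
noncomputable def mepRadius {E : Type*} [NormedAddCommGroup E] [NormedSpace ℝ E]
    (U : Finset E) (ω : E → ℝ) (S : Finset E) : ℝ :=
  ⨅ x : E, sSup ((fun a => ∑ u ∈ U, ω u * ‖a - u - x‖) '' (S : Set E))

open Finset

section aux
variable {E : Type*} [NormedAddCommGroup E] [NormedSpace ℝ E]

private noncomputable def mepF (U : Finset E) (ω : E → ℝ) (a x : E) : ℝ :=
  ∑ u ∈ U, ω u * ‖a - u - x‖

private lemma mepF_nonneg {U : Finset E} {ω : E → ℝ} (hω : ∀ u ∈ U, 0 ≤ ω u) (a x : E) :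
    0 ≤ mepF U ω a x :=
  Finset.sum_nonneg fun u hu => mul_nonneg (hω u hu) (norm_nonneg _)

private lemma mepRadius_eq_sup' {U : Finset E} {ω : E → ℝ} {S : Finset E} (hS : S.Nonempty) :
    mepRadius U ω S = ⨅ x : E, S.sup' hS (fun a => mepF U ω a x) := by
  unfold mepRadius
  congr 1
  ext x
  rw [Finset.sup'_eq_csSup_image]
  rfl

private lemma sup'_nonneg {U : Finset E} {ω : E → ℝ} (hω : ∀ u ∈ U, 0 ≤ ω u)
    {S : Finset E} (hS : S.Nonempty) (x : E) :
    0 ≤ S.sup' hS (fun a => mepF U ω a x) := by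
  obtain ⟨a, ha⟩ := hS
  exact le_trans (mepF_nonneg hω a x) (Finset.le_sup' (fun a => mepF U ω a x) ha)

private lemma bdd {U : Finset E} {ω : E → ℝ} (hω : ∀ u ∈ U, 0 ≤ ω u)
    {S : Finset E} (hS : S.Nonempty) :
    BddBelow (Set.range fun x : E => S.sup' hS (fun a => mepF U ω a x)) :=
  ⟨0, by rintro _ ⟨x, rfl⟩; exact sup'_nonneg hω hS x⟩

private lemma mepF_convex {U : Finset E} {ω : E → ℝ} (hω : ∀ u ∈ U, 0 ≤ ω u)
    (a : E) {r : ℝ} : Convex ℝ {x : E | mepF U ω a x ≤ r} := by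
  intro x hx y hy α β hα hβ hαβ
  simp only [Set.mem_setOf_eq] at hx hy ⊢
  have key : mepF U ω a (α • x + β • y) ≤ α * mepF U ω a x + β * mepF U ω a y := by
    unfold mepF
    rw [Finset.mul_sum, Finset.mul_sum, ← Finset.sum_add_distrib]
    apply Finset.sum_le_sum
    intro u hu
    have hv : a - u - (α • x + β • y) = α • (a - u - x) + β • (a - u - y) := by
      have h1 : α • (a - u - x) + β • (a - u - y)
          = (α + β) • (a - u) - (α • x + β • y) := by
        module
      rw [h1, hαβ, one_smul]
    rw [hv]
    calc ω u * ‖α • (a - u - x) + β • (a - u - y)‖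
        ≤ ω u * (‖α • (a - u - x)‖ + ‖β • (a - u - y)‖) :=
          mul_le_mul_of_nonneg_left (norm_add_le _ _) (hω u hu)
      _ = α * (ω u * ‖a - u - x‖) + β * (ω u * ‖a - u - y‖) := by
          rw [norm_smul, norm_smul, Real.norm_eq_abs, Real.norm_eq_abs,
            abs_of_nonneg hα, abs_of_nonneg hβ]; ring
  calc mepF U ω a (α • x + β • y) ≤ α * mepF U ω a x + β * mepF U ω a y := key
    _ ≤ α * r + β * r := by
        gcongr
    _ = r := by rw [← add_mul, hαβ, one_mul]

end aux

/-- Helly-type decomposition: the minimal enclosing polyellipsoid radius of `A`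
equals the maximum of the radii over all `(d+1)`-point subsets of `A`. -/
theorem mepRadius_eq_max_over_subsets
    {E : Type*} [NormedAddCommGroup E] [NormedSpace ℝ E] [FiniteDimensional ℝ E]
    (d : ℕ) (hd : Module.finrank ℝ E = d)
    (U A : Finset E) (ω : E → ℝ) (hω : ∀ u ∈ U, 0 ≤ ω u)
    (hsum : ∑ u ∈ U, ω u = 1) (hA : d + 1 ≤ A.card) :
    (∃ S ⊆ A, S.card = d + 1 ∧ mepRadius U ω S = mepRadius U ω A) ∧
    (∀ S ⊆ A, S.card = d + 1 → mepRadius U ω S ≤ mepRadius U ω A) := by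
  classical
  have hAne : A.Nonempty := Finset.card_pos.mp (by omega)
  -- part 2: monotonicity
  have hmono : ∀ S ⊆ A, S.Nonempty → mepRadius U ω S ≤ mepRadius U ω A := by
    intro S hSA hS
    rw [mepRadius_eq_sup' hS, mepRadius_eq_sup' hAne]
    exact ciInf_mono (bdd hω hS) fun x => Finset.sup'_mono _ hSA hS
  have hmono' : ∀ S ⊆ A, S.card = d + 1 → mepRadius U ω S ≤ mepRadius U ω A := by
    intro S hSA hScard
    exact hmono S hSA (Finset.card_pos.mp (by omega))
  refine ⟨?_, hmono'⟩
  -- the collection of (d+1)-subsets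
  set 𝒮 : Finset (Finset E) := A.powersetCard (d + 1) with h𝒮def
  have h𝒮ne : 𝒮.Nonempty := by
    obtain ⟨S, hSA, hScard⟩ := Finset.exists_subset_card_eq hA
    exact ⟨S, Finset.mem_powersetCard.mpr ⟨hSA, hScard⟩⟩
  obtain ⟨S₀, hS₀mem, hS₀max⟩ := Finset.exists_mem_eq_sup' h𝒮ne (fun S => mepRadius U ω S)
  obtain ⟨hS₀A, hS₀card⟩ := Finset.mem_powersetCard.mp hS₀mem
  refine ⟨S₀, hS₀A, hS₀card, ?_⟩
  refine le_antisymm (hmono' S₀ hS₀A hS₀card) ?_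
  -- suppose not
  by_contra hlt
  push_neg at hlt
  obtain ⟨r, hMr, hrrA⟩ := exists_between hlt
  -- Helly
  have hhelly : (⋂ a ∈ A, {x : E | mepF U ω a x ≤ r}).Nonempty := by
    apply Convex.helly_theorem (𝕜 := ℝ)
    · rw [hd]; exact hA
    · intro a _; exact mepF_convex hω a
    · intro I hIA hIcard
      rw [hd] at hIcard
      have hImem : I ∈ 𝒮 := Finset.mem_powersetCard.mpr ⟨hIA, hIcard⟩
      have hIne : I.Nonempty := Finset.card_pos.mp (by omega)
      have hIle : mepRadius U ω I ≤ mepRadius U ω S₀ := by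
        rw [← hS₀max]
        exact Finset.le_sup' (fun S => mepRadius U ω S) hImem
      have : mepRadius U ω I < r := lt_of_le_of_lt hIle hMr
      rw [mepRadius_eq_sup' hIne] at this
      obtain ⟨x, hx⟩ := exists_lt_of_ciInf_lt this
      refine ⟨x, ?_⟩
      simp only [Set.mem_iInter, Set.mem_setOf_eq]
      intro a ha
      exact le_of_lt (lt_of_le_of_lt (Finset.le_sup' (fun a => mepF U ω a x) ha) hx)
  obtain ⟨x, hx⟩ := hhelly
  simp only [Set.mem_iInter, Set.mem_setOf_eq] at hx
  have hgA : A.sup' hAne (fun a => mepF U ω a x) ≤ r :=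
    Finset.sup'_le _ _ fun a ha => hx a ha
  have : mepRadius U ω A ≤ r := by
    rw [mepRadius_eq_sup' hAne]
    exact le_trans (ciInf_le (bdd hω hAne) x) hgA
  linarith
end

section
/- If the norm ‖·‖ is strictly convex and the points in the set {a−u : a∈A, u∈U} are not collinear, then for every α in the probability simplex Δ_A = {α ∈ R_+^{|A|} : Σ_a α_a = 1} with all α_a > 0, the function h_α(x) = Σ_{a∈A} α_a Σ_{u∈U} ω_u‖a−u−x‖ is strictly convex and attains a unique minimizer on R^d. -/
/-- If every point of `S` is "same-ray" w.r.t. `x` and `y`, `x ≠ y`, then `S` is collinear. -/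
lemma collinear_of_sameRay {E : Type*} [NormedAddCommGroup E] [NormedSpace ℝ E]
    {S : Set E} {x y : E} (hxy : x ≠ y)
    (h : ∀ p ∈ S, SameRay ℝ (p - x) (p - y)) : Collinear ℝ S := by
  rw [collinear_iff_exists_forall_eq_smul_vadd]
  refine ⟨x, y - x, fun p hp => ?_⟩
  rcases h p hp with h0 | h0 | ⟨r, s, hr, hs, hrs⟩
  · exact ⟨0, by rw [sub_eq_zero] at h0; simp [h0]⟩
  · exact ⟨1, by rw [sub_eq_zero] at h0; simp [h0]⟩
  · have hne : r - s ≠ 0 := by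
      intro hrs0
      have hreq : r = s := by linarith [sub_eq_zero.mp hrs0]
      subst hreq
      have h2 : p - x = p - y := smul_right_injective E hr.ne' hrs
      exact hxy (by simpa using sub_right_injective h2)
    refine ⟨-(s / (r - s)), ?_⟩
    apply smul_right_injective E hne
    have h2 : (r - s) • p = r • x - s • y := by
      have h := hrs
      rw [smul_sub, smul_sub, sub_eq_sub_iff_sub_eq_sub] at h
      rw [sub_smul]; exact h
    have h1 : (r - s) * (-(s / (r - s))) = -s := by field_simp
    simp only [vadd_eq_add]
    rw [h2, smul_add, smul_smul, h1, neg_smul, smul_sub, sub_smul]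
    abel

/-- If the norm is strictly convex and the points `{a - u}` are not collinear,
then for any strictly positive `α` in the probability simplex, the function
`h_α(x) = ∑_a α a * ∑_u ω u * ‖a - u - x‖` is strictly convex with a unique
minimizer. -/
theorem halpha_strictConvexOn_and_unique_minimizer
    {E : Type*} [NormedAddCommGroup E] [NormedSpace ℝ E] [StrictConvexSpace ℝ E]
    [FiniteDimensional ℝ E]
    (U A : Finset E)
    (hcol : ¬ Collinear ℝ {p : E | ∃ a ∈ A, ∃ u ∈ U, p = a - u})
    (ω : E → ℝ) (hω : ∀ u ∈ U, 0 < ω u) (hsumω : ∑ u ∈ U, ω u = 1)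
    (α : E → ℝ) (hα : ∀ a ∈ A, 0 < α a) (hsumα : ∑ a ∈ A, α a = 1) :
    StrictConvexOn ℝ Set.univ
        (fun x : E => ∑ a ∈ A, α a * ∑ u ∈ U, ω u * ‖a - u - x‖) ∧
    ∃! xstar : E, ∀ y : E,
        (∑ a ∈ A, α a * ∑ u ∈ U, ω u * ‖a - u - xstar‖) ≤
          ∑ a ∈ A, α a * ∑ u ∈ U, ω u * ‖a - u - y‖ := by
  set f : E → ℝ := fun x => ∑ a ∈ A, α a * ∑ u ∈ U, ω u * ‖a - u - x‖ with hf
  have hSC : StrictConvexOn ℝ Set.univ f := by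
    refine ⟨convex_univ, ?_⟩
    intro x _ y _ hxy a b ha hb hab
    -- find a point not on the line through x and y
    have hex : ∃ p ∈ {p : E | ∃ a ∈ A, ∃ u ∈ U, p = a - u},
        ¬ SameRay ℝ (p - x) (p - y) := by
      by_contra h
      push_neg at h
      exact hcol (collinear_of_sameRay hxy h)
    obtain ⟨p0, hp0S, hp0⟩ := hex
    obtain ⟨a0, ha0, u0, hu0, hp0eq⟩ := hp0S
    have hkey : ∀ p : E, p - (a • x + b • y) = a • (p - x) + b • (p - y) := by
      intro p
      have h1 : a • p + b • p = p := by rw [← add_smul, hab, one_smul]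
      rw [smul_sub, smul_sub]
      conv_lhs => rw [← h1]
      abel
    have hle : ∀ p : E, ‖p - (a • x + b • y)‖ ≤ a * ‖p - x‖ + b * ‖p - y‖ := by
      intro p
      rw [hkey p]
      calc ‖a • (p - x) + b • (p - y)‖ ≤ ‖a • (p - x)‖ + ‖b • (p - y)‖ := norm_add_le _ _
        _ = a * ‖p - x‖ + b * ‖p - y‖ := by
            rw [norm_smul, norm_smul, Real.norm_of_nonneg ha.le, Real.norm_of_nonneg hb.le]
    have hlt : ‖p0 - (a • x + b • y)‖ < a * ‖p0 - x‖ + b * ‖p0 - y‖ := by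
      rw [hkey p0]
      have hns : ¬ SameRay ℝ (a • (p0 - x)) (b • (p0 - y)) := by
        intro h
        apply hp0
        have h1 := h.pos_smul_left (inv_pos.mpr ha)
        rw [inv_smul_smul₀ ha.ne'] at h1
        have h2 := h1.pos_smul_right (inv_pos.mpr hb)
        rwa [inv_smul_smul₀ hb.ne'] at h2
      calc ‖a • (p0 - x) + b • (p0 - y)‖ < ‖a • (p0 - x)‖ + ‖b • (p0 - y)‖ :=
            norm_add_lt_of_not_sameRay hns
        _ = a * ‖p0 - x‖ + b * ‖p0 - y‖ := by
            rw [norm_smul, norm_smul, Real.norm_of_nonneg ha.le, Real.norm_of_nonneg hb.le]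
    subst hp0eq
    have hinner_le : ∀ a' ∈ A,
        ∑ u ∈ U, ω u * ‖a' - u - (a • x + b • y)‖ ≤
          a * (∑ u ∈ U, ω u * ‖a' - u - x‖) + b * (∑ u ∈ U, ω u * ‖a' - u - y‖) := by
      intro a' _
      rw [Finset.mul_sum, Finset.mul_sum, ← Finset.sum_add_distrib]
      refine Finset.sum_le_sum fun u hu => ?_
      nlinarith [hle (a' - u), (hω u hu)]
    have hinner_lt :
        ∑ u ∈ U, ω u * ‖a0 - u - (a • x + b • y)‖ <
          a * (∑ u ∈ U, ω u * ‖a0 - u - x‖) + b * (∑ u ∈ U, ω u * ‖a0 - u - y‖) := by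
      rw [Finset.mul_sum, Finset.mul_sum, ← Finset.sum_add_distrib]
      refine Finset.sum_lt_sum (fun u hu => by nlinarith [hle (a0 - u), (hω u hu)])
        ⟨u0, hu0, by nlinarith [hlt, (hω u0 hu0)]⟩
    simp only [smul_eq_mul, hf]
    rw [Finset.mul_sum, Finset.mul_sum, ← Finset.sum_add_distrib]
    refine Finset.sum_lt_sum (fun a' ha' => by nlinarith [hinner_le a' ha', (hα a' ha')])
      ⟨a0, ha0, by nlinarith [hinner_lt, (hα a0 ha0)]⟩
  refine ⟨hSC, ?_⟩
  -- existence of a minimizer via coercivity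
  have hcont : Continuous f := by
    apply continuous_finset_sum
    intro a _
    exact continuous_const.mul <| continuous_finset_sum _ fun u _ =>
      continuous_const.mul ((continuous_const.sub continuous_id).norm)
  set C : ℝ := ∑ a ∈ A, α a * ∑ u ∈ U, ω u * ‖a - u‖ with hC
  have hlb : ∀ x : E, ‖x‖ - C ≤ f x := by
    intro x
    have h1 : ∀ a' ∈ A, ‖x‖ - (∑ u ∈ U, ω u * ‖a' - u‖) ≤ ∑ u ∈ U, ω u * ‖a' - u - x‖ := by
      intro a' _
      have h2 : ∀ u ∈ U, ω u * ‖x‖ - ω u * ‖a' - u‖ ≤ ω u * ‖a' - u - x‖ := by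
        intro u hu
        have h3 : ‖x‖ - ‖a' - u‖ ≤ ‖a' - u - x‖ :=
          calc ‖x‖ - ‖a' - u‖ ≤ ‖x - (a' - u)‖ := norm_sub_norm_le _ _
            _ = ‖a' - u - x‖ := norm_sub_rev _ _
        nlinarith [hω u hu]
      calc ‖x‖ - ∑ u ∈ U, ω u * ‖a' - u‖
          = ∑ u ∈ U, (ω u * ‖x‖ - ω u * ‖a' - u‖) := by
            rw [Finset.sum_sub_distrib, ← Finset.sum_mul, hsumω, one_mul]
        _ ≤ _ := Finset.sum_le_sum h2
    calc ‖x‖ - C = ∑ a ∈ A, α a * (‖x‖ - ∑ u ∈ U, ω u * ‖a - u‖) := by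
          simp only [mul_sub]
          rw [Finset.sum_sub_distrib, ← Finset.sum_mul, hsumα, one_mul, hC]
      _ ≤ ∑ a ∈ A, α a * ∑ u ∈ U, ω u * ‖a - u - x‖ :=
          Finset.sum_le_sum fun a' ha' =>
            mul_le_mul_of_nonneg_left (h1 a' ha') (hα a' ha').le
  have hco : Filter.Tendsto f (Filter.cocompact E) Filter.atTop := by
    refine Filter.tendsto_atTop_mono hlb ?_
    simpa [sub_eq_add_neg] using
      Filter.tendsto_atTop_add_const_right (Filter.cocompact E) (-C)
        tendsto_norm_cocompact_atTop
  obtain ⟨x1, hx1⟩ := hcont.exists_forall_le hco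
  refine ⟨x1, hx1, fun z hz => ?_⟩
  by_contra hne
  have hmid := hSC.2 (Set.mem_univ z) (Set.mem_univ x1) hne one_half_pos one_half_pos
    (by norm_num)
  have h1 := hz ((1/2 : ℝ) • z + (1/2 : ℝ) • x1)
  have h2 := hx1 ((1/2 : ℝ) • z + (1/2 : ℝ) • x1)
  simp only [smul_eq_mul] at hmid
  change f _ < _ at hmid
  change f z ≤ f _ at h1
  change f x1 ≤ f _ at h2
  linarith
end

section
/- Strong Lagrangean duality holds for the minimal enclosing polyellipsoid problem: min_{x∈R^d} max_{a∈A} Σ_{u∈U} ω_u‖a−u−x‖ = max_{α∈Δ_A} min_{x∈R^d} Σ_{a∈A} α_a Σ_{u∈U} ω_u‖a−u−x‖, where Δ_A is the probability simplex over A. -/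
/-!
Write `P` for the primal value `⨅ x, max_a F a x`. The set of vectors in `ℝ^A` dominating
`(F a x)_a` for some `x` is convex (each `F a` is convex in `x`), upward closed, and misses the
open orthant `{z | ∀ a, z a < P}`. A separating hyperplane has a nonnegative normal because the set
is upward closed; normalised to a probability vector `α`, it gives `P ≤ ∑ a, α a * F a x` for
every `x`, i.e. the dual value at `α` is at least `P`. The reverse inequality is weak duality.
-/

open Set

lemma ConvexOn.fun_sum {ι 𝕜 E β : Type*} [Semiring 𝕜] [PartialOrder 𝕜] [AddCommMonoid E]
    [SMul 𝕜 E] [AddCommMonoid β] [PartialOrder β] [IsOrderedAddMonoid β] [Module 𝕜 β]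
    {s : Finset ι} {t : Set E} (ht : Convex 𝕜 t) {f : ι → E → β}
    (hf : ∀ i ∈ s, ConvexOn 𝕜 t (f i)) : ConvexOn 𝕜 t fun x => ∑ i ∈ s, f i x := by
  simpa only [← Finset.sum_apply] using
    Finset.sum_induction f (ConvexOn 𝕜 t) (fun _ _ => ConvexOn.add) (convexOn_const 0 ht) hf

lemma LinearMap.map_nonneg_of_le_on_isUpperSet {V : Type*} [AddCommGroup V] [PartialOrder V]
    [IsOrderedAddMonoid V] [Module ℝ V] [PosSMulMono ℝ V] (φ : V →ₗ[ℝ] ℝ) {C : Set V}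
    (hC : IsUpperSet C) {z : V} (hz : z ∈ C) {u : ℝ} (hφ : ∀ w ∈ C, u ≤ φ w) {v : V}
    (hv : 0 ≤ v) : 0 ≤ φ v := by
  by_contra! hneg
  obtain ⟨n, hn⟩ := exists_nat_gt ((φ z - u) / -φ v)
  rw [div_lt_iff₀ (neg_pos.2 hneg)] at hn
  have hmem : z + (n : ℝ) • v ∈ C :=
    hC (le_add_of_nonneg_right (smul_nonneg n.cast_nonneg hv)) hz
  have := hφ _ hmem
  rw [map_add, map_smul, smul_eq_mul] at this
  linarith

lemma exists_mem_stdSimplex_le_sum_mul {ι : Type*} [Fintype ι] {C : Set (ι → ℝ)}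
    (hconv : Convex ℝ C) (hup : IsUpperSet C) (hne : C.Nonempty) {P : ℝ}
    (hP : ∀ z ∈ C, ∃ i, P ≤ z i) :
    ∃ c ∈ stdSimplex ℝ ι, ∀ z ∈ C, P ≤ ∑ i, c i * z i := by
  classical
  obtain ⟨z₀, hz₀⟩ := hne
  have hdisj : Disjoint (univ.pi fun _ => Iio P) C := by
    refine disjoint_left.2 fun z hz hzC => ?_
    obtain ⟨i, hi⟩ := hP z hzC
    exact (hz i trivial).not_ge hi
  obtain ⟨φ, u, hφlt, hφle⟩ := geometric_hahn_banach_open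
    (convex_pi fun _ _ => convex_Iio P) (isOpen_set_pi finite_univ fun _ _ => isOpen_Iio)
    hconv hdisj
  set w : ι → ℝ := fun i => φ (Pi.single i 1)
  have hφ : ∀ z, φ z = ∑ i, w i * z i := fun z => by
    have hsingle (i : ι) : (fun j => if i = j then (1 : ℝ) else 0) = Pi.single i 1 := by
      ext j; simp [Pi.single_apply, eq_comm]
    simpa [w, hsingle, mul_comm] using (φ : (ι → ℝ) →ₗ[ℝ] ℝ).pi_apply_eq_sum_univ z
  have hw : ∀ i, 0 ≤ w i := fun i =>
    (φ : (ι → ℝ) →ₗ[ℝ] ℝ).map_nonneg_of_le_on_isUpperSet hup hz₀ hφle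
      (Pi.single_nonneg.2 zero_le_one)
  have hconst : ∀ t < P, t * ∑ i, w i < u := fun t ht => by
    simpa [hφ, mul_comm, Finset.mul_sum] using hφlt (fun _ => t) fun _ _ => ht
  have hS : 0 < ∑ i, w i := by
    refine (Finset.sum_nonneg fun i _ => hw i).lt_of_ne fun h => ?_
    have hw0 := (Finset.sum_eq_zero_iff_of_nonneg fun i _ => hw i).1 h.symm
    have hu := hφle z₀ hz₀
    have hlt := hconst (P - 1) (by linarith)
    simp only [hφ, hw0, Finset.mem_univ, zero_mul, Finset.sum_const_zero, mul_zero] at hu hlt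
    linarith
  have hPu : P * ∑ i, w i ≤ u := by
    rw [← le_div_iff₀ hS]
    exact le_of_forall_lt fun t ht => (lt_div_iff₀ hS).2 (hconst t ht)
  refine ⟨fun i => w i / ∑ j, w j, ⟨fun i => div_nonneg (hw i) hS.le, ?_⟩, fun z hz => ?_⟩
  · rw [← Finset.sum_div, div_self hS.ne']
  · simp_rw [div_mul_eq_mul_div, ← Finset.sum_div]
    rw [le_div_iff₀ hS, ← hφ]
    exact hPu.trans (hφle z hz)

theorem exists_mem_stdSimplex_iInf_iSup_le_sum_mul {ι E : Type*} [Fintype ι] [Nonempty ι]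
    [AddCommGroup E] [Module ℝ E] (f : ι → E → ℝ) (hf : ∀ i, ConvexOn ℝ univ (f i))
    (hbdd : BddBelow (range fun y => ⨆ i, f i y)) :
    ∃ c ∈ stdSimplex ℝ ι, ∀ x, ⨅ y, ⨆ i, f i y ≤ ∑ i, c i * f i x := by
  set C : Set (ι → ℝ) := {z | ∃ x, ∀ i, f i x ≤ z i}
  have hconv : Convex ℝ C := by
    rintro z ⟨x, hx⟩ z' ⟨x', hx'⟩ a b ha hb hab
    refine ⟨a • x + b • x', fun i => ((hf i).2 trivial trivial ha hb hab).trans ?_⟩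
    simp only [Pi.add_apply, Pi.smul_apply, smul_eq_mul]
    gcongr
    exacts [hx i, hx' i]
  have hup : IsUpperSet C := fun z z' hzz' ⟨x, hx⟩ => ⟨x, fun i => (hx i).trans (hzz' i)⟩
  have hP : ∀ z ∈ C, ∃ i, ⨅ y, ⨆ i, f i y ≤ z i := by
    rintro z ⟨x, hx⟩
    obtain ⟨i, hi⟩ := exists_eq_ciSup_of_finite (f := fun i => f i x)
    exact ⟨i, (ciInf_le hbdd x).trans (hi.ge.trans (hx i))⟩
  obtain ⟨c, hc, hcC⟩ := exists_mem_stdSimplex_le_sum_mul hconv hup ⟨_, 0, fun _ => le_rfl⟩ hP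
  exact ⟨c, hc, fun x => hcC _ ⟨x, fun _ => le_rfl⟩⟩

lemma iInf_sum_mul_le_iInf_sSup_image {ι E : Type*} (s : Finset ι) (F : ι → E → ℝ)
    (hF : ∀ i ∈ s, ∀ x, 0 ≤ F i x) {β : ι → ℝ} (hβ₀ : ∀ i ∈ s, 0 ≤ β i)
    (hβ₁ : ∑ i ∈ s, β i = 1) :
    ⨅ x, ∑ i ∈ s, β i * F i x ≤ ⨅ x, sSup ((fun i => F i x) '' s) := by
  refine ciInf_mono ⟨0, ?_⟩ fun x => ?_
  · rintro _ ⟨x, rfl⟩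
    exact Finset.sum_nonneg fun i hi => mul_nonneg (hβ₀ i hi) (hF i hi x)
  · have hbdd : BddAbove ((fun i => F i x) '' s) := (s.finite_toSet.image _).bddAbove
    calc ∑ i ∈ s, β i * F i x ≤ ∑ i ∈ s, β i * sSup ((fun i => F i x) '' s) :=
          Finset.sum_le_sum fun i hi =>
            mul_le_mul_of_nonneg_left (le_csSup hbdd ⟨i, hi, rfl⟩) (hβ₀ i hi)
      _ = sSup ((fun i => F i x) '' s) := by rw [← Finset.sum_mul, hβ₁, one_mul]

theorem mep_strong_duality_general
    {E : Type*} [NormedAddCommGroup E] [NormedSpace ℝ E]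
    (U A : Finset E) (hA : A.Nonempty)
    (ω : E → ℝ) (hω : ∀ u ∈ U, 0 ≤ ω u) :
    ∃ α : E → ℝ, (∀ a ∈ A, 0 ≤ α a) ∧ (∑ a ∈ A, α a = 1) ∧
      (⨅ x : E, ∑ a ∈ A, α a * ∑ u ∈ U, ω u * ‖a - u - x‖) =
        (⨅ x : E, sSup ((fun a => ∑ u ∈ U, ω u * ‖a - u - x‖) '' (A : Set E))) ∧
      (∀ β : E → ℝ, (∀ a ∈ A, 0 ≤ β a) → (∑ a ∈ A, β a = 1) →
        (⨅ x : E, ∑ a ∈ A, β a * ∑ u ∈ U, ω u * ‖a - u - x‖) ≤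
          ⨅ x : E, sSup ((fun a => ∑ u ∈ U, ω u * ‖a - u - x‖) '' (A : Set E))) := by
  classical
  set F : E → E → ℝ := fun a x => ∑ u ∈ U, ω u * ‖a - u - x‖
  have hF₀ (a x : E) : 0 ≤ F a x :=
    Finset.sum_nonneg fun u hu => mul_nonneg (hω u hu) (norm_nonneg _)
  have hFconv (a : E) : ConvexOn ℝ univ (F a) :=
    ConvexOn.fun_sum convex_univ fun u hu => (convexOn_univ_norm.comp_affineMap
      (AffineMap.const ℝ E (a - u) -ᵥ AffineMap.id ℝ E)).smul (hω u hu)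
  have : Nonempty A := hA.coe_sort
  obtain ⟨c, ⟨hc₀, hc₁⟩, hc⟩ := exists_mem_stdSimplex_iInf_iSup_le_sum_mul (fun a : A => F a)
    (fun a => hFconv a) ⟨0, by rintro _ ⟨y, rfl⟩; exact Real.iSup_nonneg fun a => hF₀ a y⟩
  set α : E → ℝ := fun a => if h : a ∈ A then c ⟨a, h⟩ else 0
  have hα (g : E → ℝ) : ∑ a ∈ A, α a * g a = ∑ a : A, c a * g a := by
    simp [α, ← Finset.sum_coe_sort A]
  have hα₀ : ∀ a ∈ A, 0 ≤ α a := fun a ha => by simpa [α, ha] using hc₀ ⟨a, ha⟩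
  have hα₁ : ∑ a ∈ A, α a = 1 := by
    simpa only [Pi.one_apply, mul_one, hc₁] using hα 1
  have hweak (β : E → ℝ) := iInf_sum_mul_le_iInf_sSup_image (β := β) A F fun a _ => hF₀ a
  refine ⟨α, hα₀, hα₁, (hweak α hα₀ hα₁).antisymm (le_ciInf fun x => ?_), hweak⟩
  simp_rw [hα fun a => F a x, image_eq_range]
  exact hc x

/-- Strong Lagrangean duality for the minimal enclosing polyellipsoid problem:
the primal optimal value equals the maximum, over the probability simplex, of
the dual (Weber) values, and the maximum is attained. -/
theorem mep_strong_duality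
    {E : Type*} [NormedAddCommGroup E] [NormedSpace ℝ E] [FiniteDimensional ℝ E]
    (U A : Finset E) (hA : A.Nonempty)
    (ω : E → ℝ) (hω : ∀ u ∈ U, 0 ≤ ω u) (hsum : ∑ u ∈ U, ω u = 1) :
    ∃ α : E → ℝ, (∀ a ∈ A, 0 ≤ α a) ∧ (∑ a ∈ A, α a = 1) ∧
      (⨅ x : E, ∑ a ∈ A, α a * ∑ u ∈ U, ω u * ‖a - u - x‖) =
        (⨅ x : E, sSup ((fun a => ∑ u ∈ U, ω u * ‖a - u - x‖) '' (A : Set E))) ∧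
      (∀ β : E → ℝ, (∀ a ∈ A, 0 ≤ β a) → (∑ a ∈ A, β a = 1) →
        (⨅ x : E, ∑ a ∈ A, β a * ∑ u ∈ U, ω u * ‖a - u - x‖) ≤
          ⨅ x : E, sSup ((fun a => ∑ u ∈ U, ω u * ‖a - u - x‖) '' (A : Set E))) :=
  mep_strong_duality_general U A hA ω hω
end
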